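/- arXiv:0805.1277 — 7 statements merged into one kernel-verified Lean document; each statement's English description precedes it below -/
import Mathlib

section
/- For all natural numbers n ≥ 1 and k with 1 ≤ k ≤ n, the binomial coefficients satisfy C(n,k)·C(n+1,k-1)·C(n+2,k+1) = C(n,k-1)·C(n+1,k+1)·C(n+2,k) (the Star of David rule). -/
/-!
Multiplying both sides by `(k-1)! k! (k+1)!` turns every `C(a, b)` into the falling factorial
`a (a-1) ⋯ (a-b+1)`, an identity with no case distinctions. Each of the six falling factorials is
a product of linear factors and one of `n (n-1) ⋯ (n-k+2)` or `(n+1) n ⋯ (n-k+3)`, and both sides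
then collect the same factors.
-/

namespace Nat

theorem descFactorial_star_of_david (n m : ℕ) :
    n.descFactorial (m + 1) * (n + 1).descFactorial m * (n + 2).descFactorial (m + 2) =
      n.descFactorial m * (n + 1).descFactorial (m + 2) * (n + 2).descFactorial (m + 1) := by
  have h₁ : (n + 1).descFactorial (m + 2) = (n - m) * ((n + 1 - m) * (n + 1).descFactorial m) := by
    rw [descFactorial_succ, descFactorial_succ, Nat.add_sub_add_right]
  have h₂ : (n + 2).descFactorial (m + 2) = (n + 2) * ((n + 1 - m) * (n + 1).descFactorial m) := by
    rw [succ_descFactorial_succ, descFactorial_succ]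
  rw [h₁, h₂, succ_descFactorial_succ, descFactorial_succ]
  ring

theorem choose_star_of_david (n m : ℕ) :
    n.choose (m + 1) * (n + 1).choose m * (n + 2).choose (m + 2) =
      n.choose m * (n + 1).choose (m + 2) * (n + 2).choose (m + 1) := by
  have hpos : 0 < (m + 1)! * m ! * (m + 2)! := by positivity
  apply Nat.eq_of_mul_eq_mul_right hpos
  calc _ = n.descFactorial (m + 1) * (n + 1).descFactorial m * (n + 2).descFactorial (m + 2) := by
        simp only [descFactorial_eq_factorial_mul_choose]; ring
    _ = n.descFactorial m * (n + 1).descFactorial (m + 2) * (n + 2).descFactorial (m + 1) :=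
        descFactorial_star_of_david n m
    _ = _ := by simp only [descFactorial_eq_factorial_mul_choose]; ring

end Nat

theorem star_of_david_rule_general (n k : ℕ) (hk1 : 1 ≤ k) :
    Nat.choose n k * Nat.choose (n+1) (k-1) * Nat.choose (n+2) (k+1) =
    Nat.choose n (k-1) * Nat.choose (n+1) (k+1) * Nat.choose (n+2) k := by
  obtain ⟨m, rfl⟩ : ∃ m, k = m + 1 := ⟨k - 1, by omega⟩
  simpa using Nat.choose_star_of_david n m

theorem star_of_david_rule (n k : ℕ) (hn : 1 ≤ n) (hk1 : 1 ≤ k) (hkn : k ≤ n) :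
    Nat.choose n k * Nat.choose (n+1) (k-1) * Nat.choose (n+2) (k+1) =
    Nat.choose n (k-1) * Nat.choose (n+1) (k+1) * Nat.choose (n+2) k :=
  star_of_david_rule_general n k hk1
end

section
/- For all natural numbers n and k with 0 ≤ k ≤ n, the binomial coefficients satisfy C(n,k+1)·C(n+1,k)·C(n+2,k+2) = C(n,k)·C(n+1,k+2)·C(n+2,k+1). -/
theorem star_of_david_rule' (n k : ℕ) (hkn : k ≤ n) :
    Nat.choose n (k+1) * Nat.choose (n+1) k * Nat.choose (n+2) (k+2) =
    Nat.choose n k * Nat.choose (n+1) (k+2) * Nat.choose (n+2) (k+1) := by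
  rcases Nat.lt_or_ge n (k+1) with h | h
  · have hk : k = n := le_antisymm hkn (Nat.lt_succ_iff.mp h)
    subst hk
    simp [Nat.choose_eq_zero_of_lt]
  · -- k + 1 ≤ n
    have h1 := Nat.choose_mul_factorial_mul_factorial (show k+1 ≤ n from h)
    have h2 := Nat.choose_mul_factorial_mul_factorial (show k ≤ n+1 from le_trans hkn (by omega))
    have h3 := Nat.choose_mul_factorial_mul_factorial (show k+2 ≤ n+2 by omega)
    have h4 := Nat.choose_mul_factorial_mul_factorial hkn
    have h5 := Nat.choose_mul_factorial_mul_factorial (show k+2 ≤ n+1 by omega)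
    have h6 := Nat.choose_mul_factorial_mul_factorial (show k+1 ≤ n+2 by omega)
    have e1 : n - (k+1) = n - k - 1 := by omega
    have e2 : n + 1 - k = n - k + 1 := by omega
    have e3 : n + 2 - (k+2) = n - k := by omega
    have e5 : n + 1 - (k+2) = n - k - 1 := by omega
    have e6 : n + 2 - (k+1) = n - k + 1 := by omega
    rw [e1] at h1; rw [e2] at h2; rw [e3] at h3; rw [e5] at h5; rw [e6] at h6
    have key : (Nat.choose n (k+1) * Nat.choose (n+1) k * Nat.choose (n+2) (k+2)) *
        (Nat.factorial (k+1) * Nat.factorial (n-k-1) * Nat.factorial k * Nat.factorial (n-k+1)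
          * Nat.factorial (k+2) * Nat.factorial (n-k)) =
        (Nat.choose n k * Nat.choose (n+1) (k+2) * Nat.choose (n+2) (k+1)) *
        (Nat.factorial (k+1) * Nat.factorial (n-k-1) * Nat.factorial k * Nat.factorial (n-k+1)
          * Nat.factorial (k+2) * Nat.factorial (n-k)) := by
      calc (Nat.choose n (k+1) * Nat.choose (n+1) k * Nat.choose (n+2) (k+2)) *
          (Nat.factorial (k+1) * Nat.factorial (n-k-1) * Nat.factorial k * Nat.factorial (n-k+1)
            * Nat.factorial (k+2) * Nat.factorial (n-k)) =
          (Nat.choose n (k+1) * Nat.factorial (k+1) * Nat.factorial (n-k-1)) *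
          ((Nat.choose (n+1) k * Nat.factorial k * Nat.factorial (n-k+1)) *
          (Nat.choose (n+2) (k+2) * Nat.factorial (k+2) * Nat.factorial (n-k))) := by ring
        _ = Nat.factorial n * (Nat.factorial (n+1) * Nat.factorial (n+2)) := by rw [h1, h2, h3]
        _ = (Nat.choose n k * Nat.factorial k * Nat.factorial (n-k)) *
          ((Nat.choose (n+1) (k+2) * Nat.factorial (k+2) * Nat.factorial (n-k-1)) *
          (Nat.choose (n+2) (k+1) * Nat.factorial (k+1) * Nat.factorial (n-k+1))) := by
            rw [h4, h5, h6]
        _ = _ := by ring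
    have hpos : 0 < Nat.factorial (k+1) * Nat.factorial (n-k-1) * Nat.factorial k
        * Nat.factorial (n-k+1) * Nat.factorial (k+2) * Nat.factorial (n-k) := by
      positivity
    exact Nat.eq_of_mul_eq_mul_right hpos key
end

section
/- For all natural numbers n ≥ 1 and k with 1 ≤ k ≤ n, the Narayana numbers satisfy N(n,k+1)·N(n+1,k)·N(n+2,k+2) = N(n,k)·N(n+1,k+2)·N(n+2,k+1). -/
/-!
Writing each Narayana number as `C(n,k)·C(n,k-1)/n`, the denominators on both sides agree, and
the numerators are the products of two instances of the Star of David identity for binomial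
coefficients: the hexagons around `C(n+1,k+1)` and around `C(n+1,k)`. The Star of David identity
itself holds because both of its sides expand into the same factorials.
-/

/-- The Narayana number `N(n,k) = (1/n)·C(n,k)·C(n,k-1)` as a rational number. -/
noncomputable def narayana (n k : ℕ) : ℚ :=
  (Nat.choose n k * Nat.choose n (k-1) : ℚ) / n

theorem Nat.choose_star_of_david_s2 (n k : ℕ) :
    n.choose k * (n + 1).choose (k + 2) * (n + 2).choose (k + 1) =
      n.choose (k + 1) * (n + 1).choose k * (n + 2).choose (k + 2) := by
  rcases le_or_gt n k with h | h
  · simp [Nat.choose_eq_zero_of_lt (by omega : n < k + 1),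
      Nat.choose_eq_zero_of_lt (by omega : n + 1 < k + 2)]
  obtain ⟨m, rfl⟩ := Nat.exists_eq_add_of_lt h
  apply Nat.cast_injective (R := ℚ)
  push_cast
  rw [Nat.cast_choose ℚ (by omega : k ≤ k + m + 1),
    Nat.cast_choose ℚ (by omega : k + 2 ≤ k + m + 1 + 1),
    Nat.cast_choose ℚ (by omega : k + 1 ≤ k + m + 1 + 2),
    Nat.cast_choose ℚ (by omega : k + 1 ≤ k + m + 1),
    Nat.cast_choose ℚ (by omega : k ≤ k + m + 1 + 1),
    Nat.cast_choose ℚ (by omega : k + 2 ≤ k + m + 1 + 2)]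
  simp only [show k + m + 1 - k = m + 1 by omega, show k + m + 1 + 1 - (k + 2) = m by omega,
    show k + m + 1 + 2 - (k + 1) = m + 2 by omega, show k + m + 1 - (k + 1) = m by omega,
    show k + m + 1 + 1 - k = m + 2 by omega, show k + m + 1 + 2 - (k + 2) = m + 1 by omega]
  ring

theorem narayana_star_of_david_general (n k : ℕ) (hk1 : 1 ≤ k) :
    narayana n (k+1) * narayana (n+1) k * narayana (n+2) (k+2) =
    narayana n k * narayana (n+1) (k+2) * narayana (n+2) (k+1) := by
  have outer := Nat.choose_star_of_david_s2 n k
  have inner := Nat.choose_star_of_david_s2 n (k - 1)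
  rw [Nat.sub_add_cancel hk1, show k - 1 + 2 = k + 1 by omega] at inner
  simp only [narayana, div_mul_div_comm, Nat.add_sub_cancel, show k + 2 - 1 = k + 1 by omega]
  congr 1
  exact_mod_cast calc
    _ = (n.choose (k + 1) * (n + 1).choose k * (n + 2).choose (k + 2)) *
          (n.choose k * (n + 1).choose (k - 1) * (n + 2).choose (k + 1)) := by ring
    _ = (n.choose k * (n + 1).choose (k + 2) * (n + 2).choose (k + 1)) *
          (n.choose (k - 1) * (n + 1).choose (k + 1) * (n + 2).choose k) := by rw [outer, inner]
    _ = _ := by ring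

theorem narayana_star_of_david (n k : ℕ) (hn : 1 ≤ n) (hk1 : 1 ≤ k) (hkn : k ≤ n) :
    narayana n (k+1) * narayana (n+1) k * narayana (n+2) (k+2) =
    narayana n k * narayana (n+1) (k+2) * narayana (n+2) (k+1) :=
  narayana_star_of_david_general n k hk1
end

section
/- The Pascal triangle, i.e., the matrix P with P(n,k) = C(n,k) for n ≥ k ≥ 0, is an SDR-matrix of order m for every m ≥ 3. -/
/-!
Both sides of the Star of David rule multiply entries along two anti-diagonal segments, and the
right-hand side for `r` is the left-hand side for `p - 1 - r`. For a triangle of factorial type,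
`A n k = f n * g k * h (n - k)` such as `C(n, k) = n! / (k! (n - k)!)`, such a product splits into
the `f`-values of the rows `n, …, n + p`, the `g`-values of the columns `k, …, k + p`, which do not
depend on `r`, and the `h`-values of the differences `n - k + r - 2i` and `n - k + p - r - 1 - 2i`,
which are exchanged by `r ↦ p - 1 - r`. When a cell leaves the triangle, both sides vanish.
-/

/-- `A` is an SDR-matrix of order `m`: the generalized Star of David rule holds for
all `2 ≤ p ≤ m-1` and `0 ≤ r ≤ p-1`. -/
def IsSDR (m : ℕ) (A : ℕ → ℕ → ℕ) : Prop :=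
  ∀ n k p r : ℕ, 2 ≤ p → p ≤ m - 1 → r ≤ p - 1 →
    (∏ i ∈ Finset.range (r+1), A (n+i) (k+r-i)) *
      (∏ i ∈ Finset.range (p-r), A (n+p-i) (k+r+i+1)) =
    (∏ i ∈ Finset.range (r+1), A (n+p-i) (k+p-r+i)) *
      (∏ i ∈ Finset.range (p-r), A (n+i) (k+p-r-i-1))

open Finset
open scoped Nat

variable {M : Type*}

def sdrProd [CommMonoid M] (A : ℕ → ℕ → M) (n k p r : ℕ) : M :=
  (∏ i ∈ range (r + 1), A (n + i) (k + r - i)) *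
    ∏ i ∈ range (p - r), A (n + p - i) (k + r + i + 1)

theorem isSDR_iff_sdrProd_eq {m : ℕ} {A : ℕ → ℕ → ℕ} :
    IsSDR m A ↔ ∀ n k p r : ℕ, 2 ≤ p → p ≤ m - 1 → r ≤ p - 1 →
      sdrProd A n k p r = sdrProd A n k p (p - 1 - r) := by
  refine forall₄_congr fun n k p r => imp_congr_right fun hp => imp_congr_right fun _ =>
    imp_congr_right fun hr => Eq.congr_right ?_
  rw [sdrProd, show p - (p - 1 - r) = r + 1 by omega, show p - 1 - r + 1 = p - r by omega,
    mul_comm (∏ i ∈ range (p - r), _)]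
  congr 1 <;> exact prod_congr rfl fun i _ => by congr 1; omega

theorem map_sdrProd {N F : Type*} [CommMonoid M] [CommMonoid N] [FunLike F M N]
    [MonoidHomClass F M N] (f : F) (A : ℕ → ℕ → M) (n k p r : ℕ) :
    f (sdrProd A n k p r) = sdrProd (fun a b => f (A a b)) n k p r := by
  simp only [sdrProd, map_mul, map_prod]

section CommMonoid

variable [CommMonoid M] {n k p r : ℕ}

theorem sdrProd_mul (A B : ℕ → ℕ → M) :
    sdrProd (fun a b => A a b * B a b) n k p r = sdrProd A n k p r * sdrProd B n k p r := by
  simp only [sdrProd, prod_mul_distrib]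
  exact mul_mul_mul_comm _ _ _ _

theorem sdrProd_congr_of_le {A B : ℕ → ℕ → M} (hAB : ∀ a b, b ≤ a → A a b = B a b)
    (h₁ : k + r ≤ n) (h₂ : k + p ≤ n + r + 1) : sdrProd A n k p r = sdrProd B n k p r := by
  unfold sdrProd
  congr 1 <;> exact prod_congr rfl fun i hi => hAB _ _ (by rw [mem_range] at hi; omega)

theorem sdrProd_row (f : ℕ → M) (hr : r ≤ p) :
    sdrProd (fun a _ => f a) n k p r = ∏ i ∈ range (p + 1), f (n + i) := by
  have hrev : ∏ i ∈ range (p - r), f (n + p - i) = ∏ i ∈ range (p - r), f (n + (r + 1 + i)) :=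
    (prod_congr rfl fun i hi => by rw [mem_range] at hi; congr 1; omega).trans
      (prod_range_reflect (fun i => f (n + (r + 1 + i))) (p - r))
  rw [sdrProd, hrev, ← prod_range_add (fun i => f (n + i)), show r + 1 + (p - r) = p + 1 by omega]

theorem sdrProd_col (g : ℕ → M) (hr : r ≤ p) :
    sdrProd (fun _ b => g b) n k p r = ∏ i ∈ range (p + 1), g (k + i) := by
  have hrev : ∏ i ∈ range (r + 1), g (k + r - i) = ∏ i ∈ range (r + 1), g (k + i) :=
    (prod_congr rfl fun i hi => by rw [mem_range] at hi; congr 1; omega).trans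
      (prod_range_reflect (fun i => g (k + i)) (r + 1))
  rw [sdrProd, hrev, show p + 1 = r + 1 + (p - r) by omega,
    prod_range_add (fun i => g (k + i)) (r + 1)]
  exact congrArg _ (prod_congr rfl fun i _ => by congr 1; omega)

theorem sdrProd_symm_comp_sub (h : ℕ → M) (hr : r < p) :
    sdrProd (fun a b => h (a - b)) n k p (p - 1 - r) = sdrProd (fun a b => h (a - b)) n k p r := by
  rw [sdrProd, sdrProd, show p - (p - 1 - r) = r + 1 by omega,
    show p - 1 - r + 1 = p - r by omega, mul_comm]
  congr 1 <;> rw [← prod_range_reflect] <;>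
    exact prod_congr rfl fun i hi => by rw [mem_range] at hi; congr 1; omega

end CommMonoid

section CommMonoidWithZero

variable [CommMonoidWithZero M] {A : ℕ → ℕ → M} {n k p r : ℕ}

theorem sdrProd_eq_zero (hA : ∀ a b, a < b → A a b = 0) (hr : r < p)
    (h : n < k + r ∨ n + r + 1 < k + p) : sdrProd A n k p r = 0 := by
  rcases h with h | h
  · refine mul_eq_zero_of_left (prod_eq_zero (i := 0) (by simp) ?_) _
    exact hA _ _ (by omega)
  · refine mul_eq_zero_of_right _ (prod_eq_zero (i := p - r - 1) (by simp; omega) ?_)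
    exact hA _ _ (by omega)

theorem sdrProd_symm_of_eq_mul_mul {f g h : ℕ → M}
    (hA : ∀ a b, b ≤ a → A a b = f a * g b * h (a - b)) (hA₀ : ∀ a b, a < b → A a b = 0)
    (hr : r < p) : sdrProd A n k p (p - 1 - r) = sdrProd A n k p r := by
  by_cases hin : k + r ≤ n ∧ k + p ≤ n + r + 1
  · have hsplit : ∀ s ≤ p, sdrProd (fun a b => f a * g b * h (a - b)) n k p s =
        (∏ i ∈ range (p + 1), f (n + i)) * (∏ i ∈ range (p + 1), g (k + i)) *
          sdrProd (fun a b => h (a - b)) n k p s := fun s hs => by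
      rw [sdrProd_mul (fun a b => f a * g b), sdrProd_mul, sdrProd_row f hs, sdrProd_col g hs]
    rw [sdrProd_congr_of_le hA (by omega) (by omega), sdrProd_congr_of_le hA hin.1 hin.2,
      hsplit _ (by omega), hsplit _ hr.le, sdrProd_symm_comp_sub h hr]
  · rw [sdrProd_eq_zero hA₀ (by omega) (by omega), sdrProd_eq_zero hA₀ hr (by omega)]

end CommMonoidWithZero

theorem pascal_isSDR_general (m : ℕ) :
    IsSDR m (fun n k => Nat.choose n k) := by
  refine isSDR_iff_sdrProd_eq.2 fun n k p r _ _ hr => (Nat.castRingHom ℚ).injective_nat ?_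
  rw [map_sdrProd, map_sdrProd, Nat.coe_castRingHom]
  refine (sdrProd_symm_of_eq_mul_mul (f := fun a => (a ! : ℚ)) (g := fun b => (b ! : ℚ)⁻¹)
    (h := fun d => (d ! : ℚ)⁻¹) (fun a b hab => ?_) (fun a b hab => ?_) (by omega)).symm
  · rw [Nat.cast_choose ℚ hab, div_mul_eq_div_div, div_eq_mul_inv, div_eq_mul_inv]
  · rw [Nat.choose_eq_zero_of_lt hab, Nat.cast_zero]

theorem pascal_isSDR (m : ℕ) (hm : 3 ≤ m) :
    IsSDR m (fun n k => Nat.choose n k) :=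
  pascal_isSDR_general m
end

section
/- The Lah triangle, i.e., the matrix L with L(n,k) = C(n,k)·(n+1)!/(k+1)! for n ≥ k ≥ 0, is an SDR-matrix of order m for every m ≥ 3. -/
open Finset Nat

section

variable {M : Type*}

theorem mul_eq_mul_of_mul_eq_mul_of_balanced [CommMonoidWithZero M] [IsCancelMulZero M]
    {a b c d x x' y y' : M}
    (h₁ : a * x = c * x') (h₂ : b * y' = d * y) (hw : x * y' = x' * y) (hne : x * y' ≠ 0) :
    a * b = c * d :=
  mul_right_cancel₀ hne <| calc
    a * b * (x * y') = a * x * (b * y') := mul_mul_mul_comm a b x y'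
    _ = c * d * (x' * y) := by rw [h₁, h₂, mul_mul_mul_comm]
    _ = c * d * (x * y') := by rw [hw]

variable [CommMonoid M]

theorem prod_range_reflect_of_eq {f g : ℕ → M} {N : ℕ} (h : ∀ i < N, f (N - 1 - i) = g i) :
    ∏ i ∈ range N, f i = ∏ i ∈ range N, g i := by
  rw [← prod_range_reflect]
  exact prod_congr rfl fun i hi => h i (mem_range.1 hi)

theorem prod_range_add_mul_prod_range_comm (w : ℕ → M) (a b : ℕ) :
    (∏ i ∈ range b, w (i + a)) * ∏ i ∈ range a, w i =
      (∏ i ∈ range b, w i) * ∏ i ∈ range a, w (i + b) := by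
  have split (a b : ℕ) : (∏ i ∈ range b, w (i + a)) * ∏ i ∈ range a, w i =
      ∏ i ∈ range (a + b), w i := by
    simp only [prod_range_add, add_comm, mul_comm]
  rw [split, mul_comm, split, add_comm]

theorem prod_mul_prod_mul_shift {A : ℕ → ℕ → M} {u v : ℕ → M}
    (hA : ∀ a c t, A a c * (u (a + t) * v c) = A (a + t) (c + t) * (u a * v (c + t)))
    (s : Finset ℕ) (f g : ℕ → ℕ) (t : ℕ) :
    (∏ i ∈ s, A (f i) (g i)) * ((∏ i ∈ s, u (f i + t)) * ∏ i ∈ s, v (g i)) =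
      (∏ i ∈ s, A (f i + t) (g i + t)) * ((∏ i ∈ s, u (f i)) * ∏ i ∈ s, v (g i + t)) := by
  simp only [← prod_mul_distrib]
  exact prod_congr rfl fun i _ => hA _ _ _

end

/-- `hA` says that `A a c * v c / u a` depends only on `a - c`, written without division so that
`A` may vanish. -/
theorem isSDR_of_mul_shift {A : ℕ → ℕ → ℕ} {u v : ℕ → ℕ}
    (hu : ∀ a, u a ≠ 0) (hv : ∀ c, v c ≠ 0)
    (hA : ∀ a c t, A a c * (u (a + t) * v c) = A (a + t) (c + t) * (u a * v (c + t)))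
    (m : ℕ) : IsSDR m A := by
  intro n k p r _ _ hr
  have pair₁ := prod_mul_prod_mul_shift hA (range (r + 1)) (n + ·) (k + r - ·) (p - r)
  have pair₂ := prod_mul_prod_mul_shift hA (range (p - r)) (n + ·) (k + p - r - · - 1) (r + 1)
  have translate₁ : ∏ i ∈ range (r + 1), A (n + p - i) (k + p - r + i) =
      ∏ i ∈ range (r + 1), A (n + i + (p - r)) (k + r - i + (p - r)) :=
    prod_range_reflect_of_eq fun i hi => by congr 1 <;> omega
  have translate₂ : ∏ i ∈ range (p - r), A (n + p - i) (k + r + i + 1) =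
      ∏ i ∈ range (p - r), A (n + i + (r + 1)) (k + p - r - i - 1 + (r + 1)) :=
    prod_range_reflect_of_eq fun i hi => by congr 1 <;> omega
  have rows : (∏ i ∈ range (r + 1), u (n + i + (p - r))) * ∏ i ∈ range (p - r), u (n + i) =
      (∏ i ∈ range (r + 1), u (n + i)) * ∏ i ∈ range (p - r), u (n + i + (r + 1)) := by
    simpa only [add_assoc] using prod_range_add_mul_prod_range_comm (u <| n + ·) (p - r) (r + 1)
  have cols : (∏ i ∈ range (r + 1), v (k + r - i)) *
        ∏ i ∈ range (p - r), v (k + p - r - i - 1 + (r + 1)) =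
      (∏ i ∈ range (r + 1), v (k + r - i + (p - r))) *
        ∏ i ∈ range (p - r), v (k + p - r - i - 1) := by
    convert prod_range_add_mul_prod_range_comm (v <| k + p - ·) (p - r) (r + 1) using 2 <;>
      refine prod_congr rfl fun i hi => ?_ <;> rw [mem_range] at hi <;> congr 1 <;> omega
  rw [translate₁, translate₂]
  refine mul_eq_mul_of_mul_eq_mul_of_balanced pair₁ pair₂.symm ?_
    (by simp [prod_eq_zero_iff, hu, hv])
  rw [mul_mul_mul_comm, rows, cols, mul_mul_mul_comm]

def lah (n k : ℕ) : ℕ := n.choose k * ((n + 1)! / (k + 1)!)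

def lahWeight (a : ℕ) : ℕ := (a + 1)! * a !

theorem lahWeight_ne_zero (a : ℕ) : lahWeight a ≠ 0 :=
  mul_ne_zero (factorial_ne_zero _) (factorial_ne_zero _)

theorem lah_mul_lahWeight_mul_factorial {a c : ℕ} (h : c ≤ a) :
    lah a c * lahWeight c * (a - c)! = lahWeight a := calc
  lah a c * lahWeight c * (a - c)! =
      (a.choose c * c ! * (a - c)!) * ((a + 1)! / (c + 1)! * (c + 1)!) := by
    simp only [lah, lahWeight]; ring
  _ = lahWeight a := by
    rw [choose_mul_factorial_mul_factorial h,
      Nat.div_mul_cancel (factorial_dvd_factorial (by omega : c + 1 ≤ a + 1)),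
      lahWeight, mul_comm]

theorem lah_mul_shift (a c t : ℕ) :
    lah a c * (lahWeight (a + t) * lahWeight c) =
      lah (a + t) (c + t) * (lahWeight a * lahWeight (c + t)) := by
  rcases le_or_gt c a with h | h
  · refine Nat.eq_of_mul_eq_mul_right (factorial_pos (a - c)) ?_
    have h' := lah_mul_lahWeight_mul_factorial (by omega : c + t ≤ a + t)
    rw [Nat.add_sub_add_right] at h'
    calc lah a c * (lahWeight (a + t) * lahWeight c) * (a - c)!
        = lah a c * lahWeight c * (a - c)! * lahWeight (a + t) := by ring
      _ = lah (a + t) (c + t) * lahWeight (c + t) * (a - c)! * lahWeight a := by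
        rw [lah_mul_lahWeight_mul_factorial h, h', mul_comm]
      _ = lah (a + t) (c + t) * (lahWeight a * lahWeight (c + t)) * (a - c)! := by ring
  · simp [lah, choose_eq_zero_of_lt h, choose_eq_zero_of_lt (by omega : a + t < c + t)]

theorem lah_triangle_isSDR_general (m : ℕ) :
    IsSDR m (fun n k =>
      Nat.choose n k * (Nat.factorial (n+1) / Nat.factorial (k+1))) :=
  isSDR_of_mul_shift (A := lah) lahWeight_ne_zero lahWeight_ne_zero lah_mul_shift m

theorem lah_triangle_isSDR (m : ℕ) (hm : 3 ≤ m) :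
    IsSDR m (fun n k =>
      Nat.choose n k * (Nat.factorial (n+1) / Nat.factorial (k+1))) :=
  lah_triangle_isSDR_general m
end

section
/- Let (a_n), (b_n), (c_n) be sequences in a field with b_0 = 1 and a_n ≠ 0, c_n ≠ 0 for all n, and let A be the lower triangular matrix with A(n,k) = a_k·b_{n-k}·c_n for n ≥ k ≥ 0. Then the matrix inverse of A (as a lower triangular matrix) has entries (A^{-1})(n,k) = a_n^{-1}·B_{n-k}·c_k^{-1}, where B_0 = 1 and B_n = Σ_{j=1}^{n} (-1)^j Σ_{i_1+⋯+i_j = n, each i_t ≥ 1} b_{i_1}·b_{i_2}·⋯·b_{i_j} for n ≥ 1. -/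
/-!
After cancelling the diagonal factors `a` and `c`, the identity `A * M = 1` says that the power
series `∑ Bₙ Xⁿ` is the reciprocal of `∑ bₙ Xⁿ = 1 + φ`, where `φ` has no constant term. That
reciprocal is the geometric series `∑ⱼ (-φ)ʲ`, and the coefficient of `Xⁿ` in `φʲ` is the sum of
`b_{i₁} ⋯ b_{iⱼ}` over the compositions `i₁ + ⋯ + iⱼ = n` into positive parts.
-/

open Finset PowerSeries

theorem Finset.Nat.sum_antidiagonalTuple_succ {M : Type*} [AddCommMonoid M] (k n : ℕ)
    (g : (Fin (k + 1) → ℕ) → M) :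
    ∑ x ∈ Nat.antidiagonalTuple (k + 1) n, g x =
      ∑ p ∈ antidiagonal n, ∑ x ∈ Nat.antidiagonalTuple k p.2, g (Fin.cons p.1 x) := by
  change (Multiset.map g (List.Nat.antidiagonalTuple (k + 1) n : Multiset (Fin (k + 1) → ℕ))).sum =
    (Multiset.map _ (List.Nat.antidiagonal n : Multiset (ℕ × ℕ))).sum
  simp only [List.Nat.antidiagonalTuple, Multiset.map_coe, Multiset.sum_coe, List.map_flatMap]
  induction List.Nat.antidiagonal n with
  | nil => rfl
  | cons p l ih =>
    rw [List.flatMap_cons, List.sum_append, ih, List.map_cons, List.sum_cons, List.map_map]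
    rfl

theorem Finset.Nat.sum_Icc_sub_eq_sum_antidiagonal {M : Type*} [AddCommMonoid M]
    (f : ℕ → ℕ → M) {k n : ℕ} (hkn : k ≤ n) :
    ∑ j ∈ Icc k n, f (n - j) (j - k) = ∑ p ∈ antidiagonal (n - k), f p.1 p.2 := by
  rw [← Nat.sum_antidiagonal_swap]
  simp only [Prod.fst_swap, Prod.snd_swap]
  rw [Nat.sum_antidiagonal_eq_sum_range_succ (fun i j => f j i), ← Ico_add_one_right_eq_Icc,
    sum_Ico_eq_sum_range]
  refine sum_congr (by congr 1; omega) fun i _ => ?_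
  congr 1 <;> omega

namespace PowerSeries

variable {R : Type*}

theorem coeff_pow_eq_sum_antidiagonalTuple [CommSemiring R] (φ : R⟦X⟧) (k n : ℕ) :
    coeff n (φ ^ k) = ∑ x ∈ Finset.Nat.antidiagonalTuple k n, ∏ i, coeff (x i) φ := by
  induction k generalizing n with
  | zero => cases n <;> simp [coeff_one]
  | succ k ih =>
    simp only [pow_succ', coeff_mul, Finset.Nat.sum_antidiagonalTuple_succ, Fin.prod_univ_succ,
      Fin.cons_zero, Fin.cons_succ, ih, mul_sum]

theorem coeff_pow_sub_constantCoeff [CommRing R] (φ : R⟦X⟧) (k n : ℕ) :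
    coeff n ((φ - C (constantCoeff φ)) ^ k) =
      ∑ x ∈ (Finset.Nat.antidiagonalTuple k n).filter (fun x => ∀ i, 0 < x i),
        ∏ i, coeff (x i) φ := by
  rw [coeff_pow_eq_sum_antidiagonalTuple, sum_filter]
  refine sum_congr rfl fun x _ => ?_
  split_ifs with hx
  · refine prod_congr rfl fun i _ => ?_
    rw [map_sub, coeff_C, if_neg (hx i).ne', sub_zero]
  · push Not at hx
    obtain ⟨i, hi⟩ := hx
    refine prod_eq_zero (mem_univ i) ?_
    rw [Nat.le_zero.mp hi, map_sub, coeff_C, if_pos rfl, coeff_zero_eq_constantCoeff_apply,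
      sub_self]

theorem coeff_pow_eq_zero_of_lt [CommSemiring R] {φ : R⟦X⟧} (hφ : constantCoeff φ = 0)
    {k n : ℕ} (h : n < k) : coeff n (φ ^ k) = 0 :=
  X_pow_dvd_iff.mp (pow_dvd_pow_of_dvd (X_dvd_iff.mpr hφ) k) n h

/-- Up to degree `n`, `(1 + φ)⁻¹` agrees with `∑_{j ≤ n} (-φ) ^ j`, since `φ ^ (n + 1)` only
starts in degree `n + 1`. -/
theorem one_add_mul_mk_sum_coeff_neg_pow [CommRing R] {φ : R⟦X⟧} (hφ : constantCoeff φ = 0) :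
    (1 + φ) * mk (fun n => ∑ j ∈ range (n + 1), coeff n ((-φ) ^ j)) = 1 := by
  have hφ' : constantCoeff (-φ) = 0 := by rw [map_neg, hφ, neg_zero]
  ext N
  have htrunc : ∀ p ∈ antidiagonal N,
      coeff p.1 (1 + φ) * ∑ j ∈ range (p.2 + 1), coeff p.2 ((-φ) ^ j) =
        coeff p.1 (1 + φ) * coeff p.2 (∑ j ∈ range (N + 1), (-φ) ^ j) := by
    intro p hp
    rw [HasAntidiagonal.mem_antidiagonal] at hp
    rw [map_sum, ← sum_range_add_sum_Ico _ (by omega : p.2 + 1 ≤ N + 1),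
      sum_eq_zero (s := Ico _ _) fun j hj => coeff_pow_eq_zero_of_lt hφ' (mem_Ico.mp hj).1,
      add_zero]
  rw [coeff_mul]
  simp only [coeff_mk]
  rw [sum_congr rfl htrunc, ← coeff_mul, ← sub_neg_eq_add, mul_neg_geom_sum, map_sub,
    coeff_pow_eq_zero_of_lt hφ' N.lt_succ_self, sub_zero]

theorem mk_mul_mk_eq_one_of_eq_sum_compositions [CommRing R] {b B : ℕ → R} (hb0 : b 0 = 1)
    (hB0 : B 0 = 1)
    (hB : ∀ n, 1 ≤ n → B n = ∑ j ∈ Icc 1 n, (-1 : R) ^ j *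
      ∑ x ∈ (Finset.Nat.antidiagonalTuple j n).filter (fun x => ∀ i, 0 < x i), ∏ i, b (x i)) :
    mk b * mk B = 1 := by
  set φ := mk b - C (constantCoeff (mk b)) with hφ_def
  have hφ : constantCoeff φ = 0 := by rw [hφ_def, map_sub, constantCoeff_C, sub_self]
  have hb : mk b = 1 + φ := by
    rw [hφ_def, ← coeff_zero_eq_constantCoeff_apply, coeff_mk, hb0, map_one, add_sub_cancel]
  have hB' : B = fun n => ∑ j ∈ range (n + 1), coeff n ((-φ) ^ j) := by
    funext n
    rcases n.eq_zero_or_pos with rfl | hn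
    · simp [hB0]
    rw [hB n hn, range_eq_Ico, sum_eq_sum_Ico_succ_bot n.succ_pos, pow_zero, coeff_one,
      if_neg hn.ne', zero_add, zero_add, Nat.succ_eq_add_one, Ico_add_one_right_eq_Icc]
    refine sum_congr rfl fun j _ => ?_
    have hneg : (-φ) ^ j = C ((-1) ^ j) * φ ^ j := by rw [neg_pow, map_pow, map_neg, map_one]
    rw [hneg, coeff_C_mul, hφ_def, coeff_pow_sub_constantCoeff]
    simp only [coeff_mk]
  rw [hb, hB']
  exact one_add_mul_mk_sum_coeff_neg_pow hφ

end PowerSeries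

theorem inverse_of_three_factor_matrix {F : Type*} [Field F]
    (a b c B : ℕ → F) (hb0 : b 0 = 1)
    (ha : ∀ n, a n ≠ 0) (hc : ∀ n, c n ≠ 0)
    (hB0 : B 0 = 1)
    (hB : ∀ n, 1 ≤ n → B n =
      ∑ j ∈ Finset.Icc 1 n, (-1 : F)^j *
        ∑ f ∈ (Finset.Nat.antidiagonalTuple j n).filter (fun f => ∀ t, 0 < f t),
          ∏ t, b (f t))
    (A M : ℕ → ℕ → F)
    (hA : ∀ n k, A n k = if k ≤ n then a k * b (n-k) * c n else 0)
    (hM : ∀ n k, M n k = if k ≤ n then (a n)⁻¹ * B (n-k) * (c k)⁻¹ else 0) :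
    ∀ n k, k ≤ n → ∑ j ∈ Finset.Icc k n, A n j * M j k =
      if n = k then 1 else 0 := by
  intro n k hkn
  have hterm : ∀ j ∈ Icc k n, A n j * M j k = c n * (c k)⁻¹ * (b (n - j) * B (j - k)) := by
    intro j hj
    rw [mem_Icc] at hj
    rw [hA, hM, if_pos hj.2, if_pos hj.1]
    field_simp [ha j]
  rw [sum_congr rfl hterm, ← mul_sum,
    Finset.Nat.sum_Icc_sub_eq_sum_antidiagonal (fun i j => b i * B j) hkn]
  have hsum := congrArg (coeff (n - k)) (mk_mul_mk_eq_one_of_eq_sum_compositions hb0 hB0 hB)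
  rw [coeff_mul] at hsum
  simp only [coeff_mk] at hsum
  rw [hsum, coeff_one]
  rcases hkn.eq_or_lt with rfl | hlt
  · simp [hc k]
  · simp [hlt.ne', Nat.sub_ne_zero_of_lt hlt]
end

section
/- The matrix A with A(n,k) = C((n+k)/2, (n-k)/2) when n-k is even and A(n,k) = 0 when n-k is odd (for n ≥ k ≥ 0) is an SDR-matrix of order 3 but is not an SDR-matrix of order 4. -/
def aeratedPascal (n k : ℕ) : ℕ :=
  if k ≤ n ∧ (n - k) % 2 = 0 then Nat.choose ((n+k)/2) ((n-k)/2) else 0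

def IsAerated (A : ℕ → ℕ → ℕ) : Prop := ∀ n k, Odd (n + k) → A n k = 0

namespace IsAerated

variable {A : ℕ → ℕ → ℕ}

theorem mul_eq_zero (hA : IsAerated A) (n k : ℕ) : A n k * A (n + 2) (k + 1) = 0 := by
  rcases Nat.even_or_odd (n + k) with h | h
  · have hodd : Odd (n + 2 + (k + 1)) := by
      rw [show n + 2 + (k + 1) = n + k + 3 by ring]
      exact h.add_odd (by decide)
    exact mul_eq_zero_of_right _ (hA _ _ hodd)
  · exact mul_eq_zero_of_left (hA _ _ h) _

theorem isSDR_three (hA : IsAerated A) : IsSDR 3 A := by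
  intro n k p r _ hp3 hr
  obtain rfl : p = 2 := by omega
  have h₁ := hA.mul_eq_zero n k
  have h₂ := hA.mul_eq_zero n (k + 1)
  obtain rfl | rfl : r = 0 ∨ r = 1 := by omega
  all_goals
    simp only [Finset.prod_range_succ, Finset.prod_range_zero, one_mul, Nat.add_sub_cancel,
      Nat.sub_zero, add_zero]
    grind

end IsAerated

theorem aeratedPascal_isAerated : IsAerated aeratedPascal := by
  intro n k hodd
  rw [aeratedPascal, if_neg]
  rintro ⟨hkn, heven⟩
  exact Nat.not_even_iff_odd.mpr hodd (Nat.even_iff.mpr (by omega))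

theorem aeratedPascal_not_isSDR_four : ¬ IsSDR 4 aeratedPascal := by
  intro h
  have := h 2 0 3 0 (by norm_num) (by norm_num) (by norm_num)
  revert this
  decide

theorem aerated_pascal_isSDR3_not_isSDR4 :
    IsSDR 3 (fun n k => if k ≤ n ∧ (n - k) % 2 = 0
        then Nat.choose ((n+k)/2) ((n-k)/2) else 0) ∧
    ¬ IsSDR 4 (fun n k => if k ≤ n ∧ (n - k) % 2 = 0
        then Nat.choose ((n+k)/2) ((n-k)/2) else 0) :=
  ⟨aeratedPascal_isAerated.isSDR_three, aeratedPascal_not_isSDR_four⟩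
end
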